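/- Let (T,+) be a commutative monoid with identity 0, let k, m, n ∈ ℕ with n ≥ 1, and let M be a k×m matrix with entries in ℕ, acting on column vectors in Tᵐ via natural-number scalar multiplication (repeated addition, with 0·t = 0 for all t ∈ T). For each i ∈ {1,…,m} let τᵢ : Sₙ ∪ S₀ → T be an S₀-independent semigroup homomorphism, i.e. a homomorphism with τᵢ(uw) = τᵢ(w) = τᵢ(wu) for all w ∈ Sₙ ∪ S₀ and u ∈ S₀ (equivalently, τᵢ vanishes on S₀). Define ψ : Sₙ → Tᵐ by ψ(w) = (τ₁(w),…,τₘ(w))ᵀ, and assume that for every k-tuple C₁,…,C_k of IP sets in T there exists a ∈ Sₙ with Mψ(a) ∈ C₁ × ⋯ × C_k. Let B_i = FS(⟨x_n^{(i)}⟩_{n=1}^∞) for sequences ⟨x_n^{(i)}⟩ in T, 1 ≤ i ≤ k, and let D ⊆ S₀ be a C-set in the semigroup S₀. Then there exists a sequence ⟨wᵢ⟩_{i=1}^∞ in Sₙ such that for every finite nonempty G = {m₁ < m₂ < … < m_l} ⊆ ℕ and all choices ā₁ ∈ A_{m₁}ⁿ, …, ā_l ∈ A_{m_l}ⁿ, the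 concatenation w_{m₁}(ā₁) w_{m₂}(ā₂) ⋯ w_{m_l}(ā_l) belongs to D, and Mψ(w_{m₁} w_{m₂} ⋯ w_{m_l}) ∈ B₁ × B₂ × ⋯ × B_k. -/

import Mathlib

open scoped BigOperators

attribute [local instance] Ultrafilter.mul Ultrafilter.semigroup

namespace InfHJ

variable {α : Type*}

/-- The union alphabet `A = ⋃ᵢ Aᵢ`. -/
def bigA (𝒜 : ℕ → Set α) : Set α := ⋃ i, 𝒜 i

/-- `S₀`: the set of nonempty finite words all of whose letters come from `A`
(viewed inside the free monoid on `α ⊕ Fin n`, letters `Sum.inl a`, variables `Sum.inr i`). -/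
def S0 (𝒜 : ℕ → Set α) (n : ℕ) : Set (FreeMonoid (α ⊕ Fin n)) :=
  {w | FreeMonoid.toList w ≠ [] ∧
    ∀ x ∈ FreeMonoid.toList w, ∃ a ∈ bigA 𝒜, x = Sum.inl a}

/-- `Sₙ`: the set of `n`-variable words over `A`: every letter is in `A` and
every variable `vᵢ` (`i : Fin n`) occurs at least once. -/
def SV (𝒜 : ℕ → Set α) (n : ℕ) : Set (FreeMonoid (α ⊕ Fin n)) :=
  {w | (∀ x ∈ FreeMonoid.toList w, ∀ a : α, x = Sum.inl a → a ∈ bigA 𝒜) ∧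
    ∀ i : Fin n, Sum.inr i ∈ FreeMonoid.toList w}

/-- Substitution `w(x⃗)`: replace every occurrence of the variable `vᵢ` by the letter `xᵢ`. -/
def subst {n : ℕ} (w : FreeMonoid (α ⊕ Fin n)) (x : Fin n → α) :
    FreeMonoid (α ⊕ Fin n) :=
  FreeMonoid.map (Sum.elim Sum.inl fun i => Sum.inl (x i)) w

/-- The tuples `ā ∈ Aₘⁿ`. -/
def tuples (𝒜 : ℕ → Set α) (m n : ℕ) : Set (Fin n → α) := {a | ∀ j, a j ∈ 𝒜 m}

/-- `D` is a J-set in the (sub)semigroup `S` of the monoid `M`: for every finite set `F` of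
sequences in `S` there are `m ≥ 1`, `a₁,…,a_{m+1} ∈ S` and `t₁ < … < t_m` such that
`a₁ f(t₁) a₂ f(t₂) ⋯ a_m f(t_m) a_{m+1} ∈ D` for every `f ∈ F`. -/
def IsJSetIn {M : Type*} [Monoid M] (S D : Set M) : Prop :=
  ∀ F : Finset (ℕ → M), (∀ f ∈ F, ∀ t, f t ∈ S) →
    ∃ m : ℕ, 1 ≤ m ∧ ∃ a : Fin (m + 1) → M, (∀ i, a i ∈ S) ∧
      ∃ t : Fin m → ℕ, StrictMono t ∧ ∀ f ∈ F,
        (List.ofFn fun i : Fin m => a i.castSucc * f (t i)).prod * a (Fin.last m) ∈ D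

/-- `D` is piecewise syndetic in the (sub)semigroup `S` of the monoid `M`: there is a finite
`F ⊆ S` such that for every finite `E ⊆ S` there is `x ∈ S` with `E·x ⊆ ⋃_{t ∈ F} t⁻¹D`. -/
def IsPWSIn {M : Type*} [Monoid M] (S D : Set M) : Prop :=
  ∃ F : Finset M, ↑F ⊆ S ∧
    ∀ E : Finset M, ↑E ⊆ S → ∃ x ∈ S, ∀ e ∈ E, ∃ t ∈ F, t * (e * x) ∈ D

/-- A (two-sided) ideal of the subsemigroup `B`. -/
def IsIdealIn {T : Type*} [Mul T] (B I : Set T) : Prop :=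
  I.Nonempty ∧ I ⊆ B ∧ ∀ x ∈ I, ∀ t ∈ B, t * x ∈ I ∧ x * t ∈ I

/-- `K` is the smallest (two-sided) ideal of the subsemigroup `B`. -/
def IsSmallestIdealIn {T : Type*} [Mul T] (B K : Set T) : Prop :=
  IsIdealIn B K ∧ ∀ I, IsIdealIn B I → K ⊆ I

/-- `D` is central in the (sub)semigroup `S` of the semigroup `M`: `D` belongs to some
idempotent ultrafilter lying in the smallest two-sided ideal of
`βS = {q : Ultrafilter M | S ∈ q}`. -/
def IsCentralIn {M : Type*} [Semigroup M] (S D : Set M) : Prop :=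
  ∃ p : Ultrafilter M, S ∈ p ∧ p * p = p ∧
    (∃ K : Set (Ultrafilter M), IsSmallestIdealIn {q : Ultrafilter M | S ∈ q} K ∧ p ∈ K) ∧
    D ∈ p

/-- `D` is a C-set in the (sub)semigroup `S` of the monoid `M`: `D` belongs to some
idempotent ultrafilter on `S` all of whose members are J-sets in `S`. -/
def IsCSetIn {M : Type*} [Monoid M] (S D : Set M) : Prop :=
  ∃ p : Ultrafilter M, S ∈ p ∧ p * p = p ∧
    (∀ B ∈ p, IsJSetIn S (B ∩ S)) ∧ D ∈ p

/-- `FS(⟨xₙ⟩)` in a commutative additive monoid: all finite sums over nonempty finite index sets. -/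
def FSset {T : Type*} [AddCommMonoid T] (x : ℕ → T) : Set T :=
  {s | ∃ H : Finset ℕ, H.Nonempty ∧ s = ∑ n ∈ H, x n}

/-- `FP(⟨y_t⟩)` in a (not necessarily commutative) monoid: all products
`y_{t₁} ⋯ y_{t_l}` with `t₁ < … < t_l`, taken in increasing order of indices. -/
def FPset {T : Type*} [Monoid T] (y : ℕ → T) : Set T :=
  {u | ∃ G : Finset ℕ, G.Nonempty ∧ u = ((G.sort (· ≤ ·)).map y).prod}

/-- `C` is an IP set in the commutative monoid `T`. -/
def IsIPSet {T : Type*} [AddCommMonoid T] (C : Set T) : Prop :=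
  ∃ x : ℕ → T, FSset x ⊆ C

/-- `τ(w) = |w|_{v}`: the number of occurrences of variables in `w`
(for one-variable words this is the number of occurrences of `v₁`). -/
def tauCount {n : ℕ} (w : FreeMonoid (α ⊕ Fin n)) : ℕ :=
  (FreeMonoid.toList w).countP Sum.isRight

/-- `T`: the words over `{v₁,…,v_k}` in which every `vᵢ` occurs. -/
def Tfull (k : ℕ) : Set (FreeMonoid (Fin k)) :=
  {u | FreeMonoid.toList u ≠ [] ∧ ∀ i : Fin k, i ∈ FreeMonoid.toList u}

/-- `τ(w)`: delete from `w` all letters of `A` and all variables `vᵢ` with `i ≥ k`,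
leaving a word over `{v₁,…,v_k}`. -/
def tauDel {n : ℕ} (k : ℕ) (w : FreeMonoid (α ⊕ Fin n)) : FreeMonoid (Fin k) :=
  FreeMonoid.ofList <| (FreeMonoid.toList w).filterMap fun x =>
    match x with
    | Sum.inl _ => none
    | Sum.inr i => if h : (i : ℕ) < k then some ⟨i, h⟩ else none

section Aux
variable {𝒜 : ℕ → Set α} {n : ℕ}

lemma toList_mul (u v : FreeMonoid (α ⊕ Fin n)) :
    FreeMonoid.toList (u * v) = u.toList ++ v.toList := rfl

lemma S0_mul {u v : FreeMonoid (α ⊕ Fin n)} (hu : u ∈ S0 𝒜 n) (hv : v ∈ S0 𝒜 n) :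
    u * v ∈ S0 𝒜 n := by
  refine ⟨by simp [toList_mul, hu.1], ?_⟩
  intro y hy
  rw [toList_mul, List.mem_append] at hy
  rcases hy with h | h
  · exact hu.2 y h
  · exact hv.2 y h

lemma S0_letters {u : FreeMonoid (α ⊕ Fin n)} (hu : u ∈ S0 𝒜 n) :
    ∀ y ∈ FreeMonoid.toList u, ∀ a : α, y = Sum.inl a → a ∈ bigA 𝒜 := by
  intro y hy a hya
  obtain ⟨b, hb, rfl⟩ := hu.2 y hy
  cases hya; exact hb

lemma SV_mul_right {u v : FreeMonoid (α ⊕ Fin n)} (hu : u ∈ SV 𝒜 n ∪ S0 𝒜 n)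
    (hv : v ∈ SV 𝒜 n) : u * v ∈ SV 𝒜 n := by
  constructor
  · intro y hy a hya
    rw [toList_mul, List.mem_append] at hy
    rcases hy with h | h
    · rcases hu with hu | hu
      · exact hu.1 y h a hya
      · exact S0_letters hu y h a hya
    · exact hv.1 y h a hya
  · intro i
    rw [toList_mul, List.mem_append]
    exact Or.inr (hv.2 i)

lemma SV_mul_left {u v : FreeMonoid (α ⊕ Fin n)} (hu : u ∈ SV 𝒜 n)
    (hv : v ∈ SV 𝒜 n ∪ S0 𝒜 n) : u * v ∈ SV 𝒜 n := by
  constructor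
  · intro y hy a hya
    rw [toList_mul, List.mem_append] at hy
    rcases hy with h | h
    · exact hu.1 y h a hya
    · rcases hv with hv | hv
      · exact hv.1 y h a hya
      · exact S0_letters hv y h a hya
  · intro i
    rw [toList_mul, List.mem_append]
    exact Or.inl (hu.2 i)

lemma subst_mul {u v : FreeMonoid (α ⊕ Fin n)} (x : Fin n → α) :
    subst (u * v) x = subst u x * subst v x := map_mul _ u v

lemma subst_S0 {u : FreeMonoid (α ⊕ Fin n)} (hu : u ∈ S0 𝒜 n) (x : Fin n → α) :
    subst u x = u := by
  have : FreeMonoid.toList (subst u x) = FreeMonoid.toList u := by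
    show (FreeMonoid.toList u).map _ = FreeMonoid.toList u
    conv_rhs => rw [← List.map_id (FreeMonoid.toList u)]
    refine List.map_congr_left ?_
    intro y hy
    obtain ⟨a, _, rfl⟩ := hu.2 y hy
    rfl
  exact FreeMonoid.toList.injective this

lemma subst_list_prod (L : List (FreeMonoid (α ⊕ Fin n))) (x : Fin n → α) :
    subst L.prod x = (L.map (fun w => subst w x)).prod :=
  map_list_prod (FreeMonoid.map (Sum.elim Sum.inl fun i => Sum.inl (x i))) L

lemma subst_sandwich {mJ : ℕ} (a : Fin (mJ + 1) → FreeMonoid (α ⊕ Fin n))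
    (ha : ∀ i, a i ∈ S0 𝒜 n) (c : Fin mJ → FreeMonoid (α ⊕ Fin n)) (x : Fin n → α) :
    subst ((List.ofFn fun i => a i.castSucc * c i).prod * a (Fin.last mJ)) x
      = (List.ofFn fun i => a i.castSucc * subst (c i) x).prod * a (Fin.last mJ) := by
  rw [subst_mul, subst_S0 (ha _), subst_list_prod, List.map_ofFn]
  have hfn : ((fun w => subst w x) ∘ fun i : Fin mJ => a i.castSucc * c i)
      = fun i : Fin mJ => a i.castSucc * subst (c i) x := by
    funext i
    show subst (a i.castSucc * c i) x = _
    rw [subst_mul, subst_S0 (ha _)]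
  rw [hfn]

lemma subst_SV_mem_S0 (hn : 1 ≤ n) {u : FreeMonoid (α ⊕ Fin n)} (hu : u ∈ SV 𝒜 n)
    {r : ℕ} {x : Fin n → α} (hx : x ∈ tuples 𝒜 r n) : subst u x ∈ S0 𝒜 n := by
  constructor
  · have hne : FreeMonoid.toList u ≠ [] := by
      intro h
      have := hu.2 ⟨0, hn⟩
      rw [h] at this; exact absurd this List.not_mem_nil
    show (FreeMonoid.toList u).map _ ≠ []
    simpa using hne
  · intro y hy
    show ∃ a ∈ bigA 𝒜, y = Sum.inl a
    have hy' : y ∈ (FreeMonoid.toList u).map (Sum.elim Sum.inl fun i => Sum.inl (x i)) := hy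
    rw [List.mem_map] at hy'
    obtain ⟨z, hz, rfl⟩ := hy'
    cases z with
    | inl a => exact ⟨a, hu.1 _ hz a rfl, rfl⟩
    | inr i => exact ⟨x i, Set.mem_iUnion.2 ⟨r, hx i⟩, rfl⟩

lemma prod_SV_mem : ∀ {L : List (FreeMonoid (α ⊕ Fin n))}, L ≠ [] →
    (∀ u ∈ L, u ∈ SV 𝒜 n) → L.prod ∈ SV 𝒜 n := by
  intro L
  induction L with
  | nil => intro h; exact absurd rfl h
  | cons u L ih =>
    intro _ h
    rcases eq_or_ne L [] with rfl | hL
    · simpa using h u (by simp)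
    · rw [List.prod_cons]
      exact SV_mul_left (h u (by simp)) (Or.inl (ih hL fun v hv => h v (by simp [hv])))

lemma sandwich_SV : ∀ {L : List (FreeMonoid (α ⊕ Fin n) × FreeMonoid (α ⊕ Fin n))},
    L ≠ [] → (∀ pr ∈ L, pr.1 ∈ S0 𝒜 n ∧ pr.2 ∈ SV 𝒜 n) →
    ∀ {c : FreeMonoid (α ⊕ Fin n)}, c ∈ S0 𝒜 n →
    ((L.map fun pr => pr.1 * pr.2).prod * c) ∈ SV 𝒜 n := by
  intro L
  induction L with
  | nil => intro h; exact absurd rfl h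
  | cons pr L ih =>
    intro _ h c hc
    rcases eq_or_ne L [] with rfl | hL
    · simp only [List.map_cons, List.map_nil, List.prod_cons, List.prod_nil, mul_one]
      exact SV_mul_left (SV_mul_right (Or.inr (h pr (by simp)).1) (h pr (by simp)).2)
        (Or.inr hc)
    · have hQ := ih hL (fun q hq => h q (by simp [hq])) hc
      rw [List.map_cons, List.prod_cons, mul_assoc]
      exact SV_mul_right
        (Or.inl (SV_mul_right (Or.inr (h pr (by simp)).1) (h pr (by simp)).2)) hQ


section Tau
variable {T : Type*} [AddCommMonoid T]

lemma tau_prod_SV (τj : FreeMonoid (α ⊕ Fin n) → T)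
    (hhom : ∀ u ∈ SV 𝒜 n ∪ S0 𝒜 n, ∀ w ∈ SV 𝒜 n ∪ S0 𝒜 n, τj (u * w) = τj u + τj w) :
    ∀ {L : List (FreeMonoid (α ⊕ Fin n))}, L ≠ [] → (∀ u ∈ L, u ∈ SV 𝒜 n) →
      τj L.prod = (L.map τj).sum := by
  intro L
  induction L with
  | nil => intro h; exact absurd rfl h
  | cons u L ih =>
    intro _ h
    rcases eq_or_ne L [] with rfl | hL
    · simp
    · have hu := h u (by simp)
      have hL' : ∀ v ∈ L, v ∈ SV 𝒜 n := fun v hv => h v (by simp [hv])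
      rw [List.prod_cons, hhom u (Or.inl hu) L.prod (Or.inl (prod_SV_mem hL hL')),
        List.map_cons, List.sum_cons, ih hL hL']

lemma tau_sandwich (τj : FreeMonoid (α ⊕ Fin n) → T)
    (hhom : ∀ u ∈ SV 𝒜 n ∪ S0 𝒜 n, ∀ w ∈ SV 𝒜 n ∪ S0 𝒜 n, τj (u * w) = τj u + τj w)
    (hind : ∀ w ∈ SV 𝒜 n ∪ S0 𝒜 n, ∀ u ∈ S0 𝒜 n, τj (u * w) = τj w ∧ τj (w * u) = τj w) :
    ∀ {L : List (FreeMonoid (α ⊕ Fin n) × FreeMonoid (α ⊕ Fin n))},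
    L ≠ [] → (∀ pr ∈ L, pr.1 ∈ S0 𝒜 n ∧ pr.2 ∈ SV 𝒜 n) →
    ∀ {c : FreeMonoid (α ⊕ Fin n)}, c ∈ S0 𝒜 n →
    τj ((L.map fun pr => pr.1 * pr.2).prod * c) = (L.map fun pr => τj pr.2).sum := by
  intro L
  induction L with
  | nil => intro h; exact absurd rfl h
  | cons pr L ih =>
    intro _ h c hc
    have h1 := (h pr (by simp)).1
    have h2 := (h pr (by simp)).2
    rcases eq_or_ne L [] with rfl | hL
    · simp only [List.map_cons, List.map_nil, List.prod_cons, List.prod_nil, mul_one,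
        List.sum_cons, List.sum_nil, add_zero]
      have e1 : τj (pr.1 * pr.2 * c) = τj (pr.1 * pr.2) :=
        (hind _ (Or.inl (SV_mul_right (Or.inr h1) h2)) c hc).2
      rw [e1, (hind _ (Or.inl h2) _ h1).1]
    · have hLh : ∀ q ∈ L, q.1 ∈ S0 𝒜 n ∧ q.2 ∈ SV 𝒜 n := fun q hq => h q (by simp [hq])
      have hQ := sandwich_SV hL hLh hc
      rw [List.map_cons, List.prod_cons, mul_assoc, mul_assoc,
        (hind _ (Or.inl (SV_mul_right (Or.inl h2) hQ)) _ h1).1,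
        hhom _ (Or.inl h2) _ (Or.inl hQ), List.map_cons, List.sum_cons, ih hL hLh hc]

end Tau

end Aux

theorem statement8 (𝒜 : ℕ → Set α) (hmono : Monotone 𝒜)
    (hfin : ∀ i, (𝒜 i).Finite) (hne : ∀ i, (𝒜 i).Nonempty)
    (T : Type*) [AddCommMonoid T]
    (k m n : ℕ) (hn : 1 ≤ n)
    (M : Matrix (Fin k) (Fin m) ℕ)
    (τ : Fin m → FreeMonoid (α ⊕ Fin n) → T)
    (hτhom : ∀ i : Fin m, ∀ u ∈ SV 𝒜 n ∪ S0 𝒜 n, ∀ w ∈ SV 𝒜 n ∪ S0 𝒜 n,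
      τ i (u * w) = τ i u + τ i w)
    (hτind : ∀ i : Fin m, ∀ w ∈ SV 𝒜 n ∪ S0 𝒜 n, ∀ u ∈ S0 𝒜 n,
      τ i (u * w) = τ i w ∧ τ i (w * u) = τ i w)
    (hM : ∀ C : Fin k → Set T, (∀ i, IsIPSet (C i)) →
      ∃ aw ∈ SV 𝒜 n, ∀ i : Fin k, (∑ j, M i j • τ j aw) ∈ C i)
    (x : Fin k → ℕ → T)
    (D : Set (FreeMonoid (α ⊕ Fin n))) (hD : D ⊆ S0 𝒜 n)
    (hCset : IsCSetIn (S0 𝒜 n) D) :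
    ∃ w : ℕ → FreeMonoid (α ⊕ Fin n), (∀ i, w i ∈ SV 𝒜 n) ∧
      ∀ l : ℕ, 1 ≤ l → ∀ ms : Fin l → ℕ, StrictMono ms →
        (∀ a : Fin l → Fin n → α, (∀ i, a i ∈ tuples 𝒜 (ms i) n) →
          (List.ofFn fun i : Fin l => subst (w (ms i)) (a i)).prod ∈ D) ∧
        ∀ i : Fin k,
          (∑ j, M i j • τ j (List.ofFn fun i' : Fin l => w (ms i')).prod) ∈ FSset (x i) := by
  classical
  obtain ⟨p, hpS0, hpp, hJ, hpD⟩ := hCset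
  -- key consequence of idempotence
  have hkey : ∀ S ∈ p, {a | {c | a * c ∈ S} ∈ p} ∈ p := by
    intro S hS
    have h2 : S ∈ p * p := by rw [hpp]; exact hS
    exact (Ultrafilter.eventually_mul p p (· ∈ S)).1 h2
  set Dstar : Set (FreeMonoid (α ⊕ Fin n)) := {s | s ∈ D ∧ {c | s * c ∈ D} ∈ p}
    with hDstar_def
  have hDstarD : Dstar ⊆ D := fun s hs => hs.1
  have hDstar_mem : Dstar ∈ p := Filter.inter_mem hpD (hkey D hpD)
  have hstar : ∀ s ∈ Dstar, {c | s * c ∈ Dstar} ∈ p := by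
    intro s hs
    have h1 : {c | s * c ∈ D} ∈ p := hs.2
    have h2 : {a | {c | s * (a * c) ∈ D} ∈ p} ∈ p := hkey _ h1
    refine Filter.mem_of_superset (Filter.inter_mem h1 h2) ?_
    rintro c ⟨hc1, hc2⟩
    refine ⟨hc1, ?_⟩
    have : {b | s * (c * b) ∈ D} = {b | s * c * b ∈ D} := by
      ext b; simp [mul_assoc]
    rw [← this]; exact hc2
  -- building blocks
  have honeb : ∀ N : ℕ, ∃ (aw : FreeMonoid (α ⊕ Fin n)) (N' : ℕ) (H : Fin k → Finset ℕ),
      aw ∈ SV 𝒜 n ∧ N < N' ∧ ∀ i : Fin k, (H i).Nonempty ∧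
        (∀ e ∈ H i, N < e ∧ e ≤ N') ∧ (∑ j, M i j • τ j aw) = ∑ n' ∈ H i, x i n' := by
    intro N
    have hC : ∀ i : Fin k, IsIPSet (FSset fun s => x i (s + N + 1)) :=
      fun i => ⟨_, subset_rfl⟩
    obtain ⟨aw, hawSV, haw⟩ := hM _ hC
    have hH : ∀ i : Fin k, ∃ H : Finset ℕ, H.Nonempty ∧ (∀ e ∈ H, N < e) ∧
        (∑ j, M i j • τ j aw) = ∑ n' ∈ H, x i n' := by
      intro i
      obtain ⟨H', hH'ne, hsum⟩ := haw i
      refine ⟨H'.image (fun s => s + N + 1), hH'ne.image _, ?_, ?_⟩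
      · intro e he; rw [Finset.mem_image] at he; obtain ⟨s, _, rfl⟩ := he; omega
      · rw [hsum, Finset.sum_image (by intro a _ c _ h; simp only at h; omega)]
    choose H hHne hHgt hHsum using hH
    refine ⟨aw, max (N + 1) (Finset.univ.sup fun i => (H i).sup id), H, hawSV,
      lt_of_lt_of_le (Nat.lt_succ_self N) (le_max_left _ _), fun i => ⟨hHne i, ?_, hHsum i⟩⟩
    intro e he
    refine ⟨hHgt i e he, le_trans ?_ (le_max_right _ _)⟩
    exact le_trans (Finset.le_sup (f := id) he)
      (Finset.le_sup (f := fun i => (H i).sup id) (Finset.mem_univ i))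
  choose bw bN bH hbSV hbNlt hbprops using honeb
  set Nf : ℕ → ℕ := fun t => Nat.rec 0 (fun _ prev => bN prev) t with hNf_def
  have hNfs : ∀ t, Nf (t + 1) = bN (Nf t) := fun t => rfl
  set b : ℕ → FreeMonoid (α ⊕ Fin n) := fun t => bw (Nf t) with hb_def
  set Hb : Fin k → ℕ → Finset ℕ := fun i t => bH (Nf t) i with hHb_def
  have hNmono : StrictMono Nf := strictMono_nat_of_lt_succ (fun t => hbNlt (Nf t))
  have hbSV' : ∀ t, b t ∈ SV 𝒜 n := fun t => hbSV (Nf t)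
  have hHbprop : ∀ (i : Fin k) (t : ℕ), (Hb i t).Nonempty ∧
      (∀ e ∈ Hb i t, Nf t < e ∧ e ≤ Nf (t + 1)) ∧
      (∑ j, M i j • τ j (b t)) = ∑ n' ∈ Hb i t, x i n' := by
    intro i t
    have := hbprops (Nf t) i
    exact ⟨this.1, by rw [hNfs]; exact this.2.1, this.2.2⟩
  have htupfin : ∀ r, (tuples 𝒜 r n).Finite := by
    intro r
    have hsub : tuples 𝒜 r n ⊆ Set.pi Set.univ (fun _ : Fin n => 𝒜 r) := fun a ha j _ => ha j
    exact (Set.Finite.pi fun _ => hfin r).subset hsub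
  -- one step of the construction
  have hstep : ∀ (r q : ℕ) (U : Finset (FreeMonoid (α ⊕ Fin n))), ↑U ⊆ Dstar →
      ∃ (W : FreeMonoid (α ⊕ Fin n)) (U' : Finset (FreeMonoid (α ⊕ Fin n))) (q' : ℕ),
        W ∈ SV 𝒜 n ∧ q < q' ∧ U ⊆ U' ∧ ↑U' ⊆ Dstar ∧
        (∀ av ∈ tuples 𝒜 r n, subst W av ∈ U' ∧ ∀ u ∈ U, u * subst W av ∈ U') ∧
        (∀ i : Fin k, ∃ K : Finset ℕ, K.Nonempty ∧ (∀ e ∈ K, Nf q < e ∧ e ≤ Nf q') ∧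
          (∑ j, M i j • τ j W) = ∑ n' ∈ K, x i n') := by
    intro r q U hU
    set B : Set (FreeMonoid (α ⊕ Fin n)) := Dstar ∩ ⋂ u ∈ U, {c | u * c ∈ Dstar} with hB_def
    have hBsub : B ⊆ Dstar := Set.inter_subset_left
    have hBp : B ∈ p :=
      Filter.inter_mem hDstar_mem ((Filter.biInter_finset_mem U).2 fun u hu => hstar u (hU hu))
    have hBJ : IsJSetIn (S0 𝒜 n) (B ∩ S0 𝒜 n) := hJ B hBp
    set F : Finset (ℕ → FreeMonoid (α ⊕ Fin n)) :=
      ((htupfin r).image (fun av : Fin n → α => fun t : ℕ => subst (b (q + t)) av)).toFinset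
      with hF_def
    have hFmem : ∀ av ∈ tuples 𝒜 r n, (fun t : ℕ => subst (b (q + t)) av) ∈ F := by
      intro av hav
      rw [hF_def, Set.Finite.mem_toFinset]
      exact Set.mem_image_of_mem _ hav
    have hFS0 : ∀ f ∈ F, ∀ t, f t ∈ S0 𝒜 n := by
      intro f hf t
      rw [hF_def, Set.Finite.mem_toFinset] at hf
      obtain ⟨av, hav, rfl⟩ := hf
      exact subst_SV_mem_S0 hn (hbSV' _) hav
    obtain ⟨mJ, hmJ, a, haS0, t, htmono, hprodJ⟩ := hBJ F hFS0
    set W : FreeMonoid (α ⊕ Fin n) :=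
      (List.ofFn fun i : Fin mJ => a i.castSucc * b (q + t i)).prod * a (Fin.last mJ)
      with hW_def
    set Lp : List (FreeMonoid (α ⊕ Fin n) × FreeMonoid (α ⊕ Fin n)) :=
      List.ofFn (fun i : Fin mJ => (a i.castSucc, b (q + t i))) with hLp_def
    have hLpne : Lp ≠ [] := by
      intro h
      have := congrArg List.length h
      simp [hLp_def] at this
      omega
    have hLph : ∀ pr ∈ Lp, pr.1 ∈ S0 𝒜 n ∧ pr.2 ∈ SV 𝒜 n := by
      intro pr hpr
      rw [hLp_def, List.mem_ofFn] at hpr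
      obtain ⟨i, rfl⟩ := hpr
      exact ⟨haS0 _, hbSV' _⟩
    have hWeq : W = (Lp.map fun pr => pr.1 * pr.2).prod * a (Fin.last mJ) := by
      rw [hW_def, hLp_def, List.map_ofFn]; rfl
    have hWSV : W ∈ SV 𝒜 n := hWeq ▸ sandwich_SV hLpne hLph (haS0 _)
    have hsubW : ∀ av ∈ tuples 𝒜 r n, subst W av ∈ B ∩ S0 𝒜 n := by
      intro av hav
      have hkey2 := subst_sandwich (𝒜 := 𝒜) a haS0 (fun i => b (q + t i)) av
      have hmemB := hprodJ _ (hFmem av hav)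
      rw [hW_def, hkey2]
      exact hmemB
    set T2 : Finset (FreeMonoid (α ⊕ Fin n)) :=
      ((htupfin r).image (fun av => subst W av)).toFinset with hT2_def
    have hT2mem : ∀ av ∈ tuples 𝒜 r n, subst W av ∈ T2 := by
      intro av hav
      rw [hT2_def, Set.Finite.mem_toFinset]
      exact Set.mem_image_of_mem _ hav
    have hT2B : ∀ v ∈ T2, v ∈ B ∩ S0 𝒜 n := by
      intro v hv
      rw [hT2_def, Set.Finite.mem_toFinset] at hv
      obtain ⟨av, hav, rfl⟩ := hv
      exact hsubW av hav
    set U' : Finset (FreeMonoid (α ⊕ Fin n)) :=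
      U ∪ T2 ∪ (U ×ˢ T2).image (fun pr => pr.1 * pr.2) with hU'_def
    have hU'Dstar : ↑U' ⊆ Dstar := by
      intro v hv
      rw [hU'_def] at hv
      simp only [Finset.coe_union, Set.mem_union, Finset.coe_image, Set.mem_image,
        Finset.mem_coe, Finset.mem_union] at hv
      rcases hv with (hv | hv) | hv
      · exact hU hv
      · exact hBsub (hT2B _ hv).1
      · obtain ⟨pr, hpr, rfl⟩ := hv
        rw [Finset.mem_product] at hpr
        have h1 := (hT2B _ hpr.2).1
        have h2 : pr.2 ∈ ⋂ u ∈ U, {c | u * c ∈ Dstar} := h1.2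
        rw [Set.mem_iInter₂] at h2
        exact h2 pr.1 hpr.1
    -- q'
    have hmJpos : 0 < mJ := hmJ
    set s0 : Fin mJ := ⟨0, hmJpos⟩ with hs0_def
    set slast : Fin mJ := ⟨mJ - 1, by omega⟩ with hslast_def
    set q' : ℕ := q + t slast + 1 with hq'_def
    have htle : ∀ s : Fin mJ, t s ≤ t slast := by
      intro s
      have hsv : (s : ℕ) ≤ mJ - 1 := by have := s.isLt; omega
      exact htmono.monotone (by rw [hslast_def]; exact hsv)
    refine ⟨W, U', q', hWSV, by omega, ?_, hU'Dstar, ?_, ?_⟩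
    · intro u hu
      rw [hU'_def]
      exact Finset.mem_union_left _ (Finset.mem_union_left _ hu)
    · intro av hav
      constructor
      · rw [hU'_def]
        exact Finset.mem_union_left _ (Finset.mem_union_right _ (hT2mem av hav))
      · intro u hu
        rw [hU'_def]
        refine Finset.mem_union_right _ ?_
        rw [Finset.mem_image]
        exact ⟨(u, subst W av), Finset.mem_product.2 ⟨hu, hT2mem av hav⟩, rfl⟩
    · intro i
      refine ⟨Finset.univ.biUnion (fun s : Fin mJ => Hb i (q + t s)), ?_, ?_, ?_⟩
      · obtain ⟨e, he⟩ := (hHbprop i (q + t s0)).1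
        exact ⟨e, Finset.mem_biUnion.2 ⟨s0, Finset.mem_univ _, he⟩⟩
      · intro e he
        rw [Finset.mem_biUnion] at he
        obtain ⟨s, _, he⟩ := he
        have hb1 := (hHbprop i (q + t s)).2.1 e he
        constructor
        · exact lt_of_le_of_lt
            (hNmono.monotone (show q ≤ q + t s from Nat.le_add_right _ _)) hb1.1
        · have h2 : q + t s + 1 ≤ q' := by have := htle s; omega
          exact le_trans hb1.2 (hNmono.monotone h2)
      · -- the τ computation
        have hτW : ∀ j : Fin m, τ j W = ∑ s : Fin mJ, τ j (b (q + t s)) := by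
          intro j
          rw [hWeq, tau_sandwich (τ j) (hτhom j) (hτind j) hLpne hLph (haS0 _),
            hLp_def, List.map_ofFn]
          exact List.sum_ofFn
        calc (∑ j, M i j • τ j W) = ∑ j, M i j • ∑ s : Fin mJ, τ j (b (q + t s)) := by
              simp_rw [hτW]
          _ = ∑ j, ∑ s : Fin mJ, M i j • τ j (b (q + t s)) := by
              simp_rw [Finset.smul_sum]
          _ = ∑ s : Fin mJ, ∑ j, M i j • τ j (b (q + t s)) := Finset.sum_comm
          _ = ∑ s : Fin mJ, ∑ n' ∈ Hb i (q + t s), x i n' := by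
              refine Finset.sum_congr rfl fun s _ => (hHbprop i (q + t s)).2.2
          _ = ∑ n' ∈ Finset.univ.biUnion (fun s : Fin mJ => Hb i (q + t s)), x i n' := by
              refine (Finset.sum_biUnion ?_).symm
              intro s1 hs1 s2 hs2 hne12
              have : t s1 ≠ t s2 := fun h => hne12 (htmono.injective h)
              rcases lt_or_gt_of_ne this with hlt | hlt
              · refine Finset.disjoint_left.2 fun e he1 he2 => ?_
                have h1 := ((hHbprop i (q + t s1)).2.1 e he1).2
                have h2 := ((hHbprop i (q + t s2)).2.1 e he2).1
                have : Nf (q + t s1 + 1) ≤ Nf (q + t s2) :=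
                  hNmono.monotone (show q + t s1 + 1 ≤ q + t s2 by omega)
                omega
              · refine Finset.disjoint_left.2 fun e he1 he2 => ?_
                have h1 := ((hHbprop i (q + t s2)).2.1 e he2).2
                have h2 := ((hHbprop i (q + t s1)).2.1 e he1).1
                have : Nf (q + t s2 + 1) ≤ Nf (q + t s1) :=
                  hNmono.monotone (show q + t s2 + 1 ≤ q + t s1 by omega)
                omega
  -- make the step function total
  have hstep' : ∀ (r : ℕ) (s : Finset (FreeMonoid (α ⊕ Fin n)) × ℕ),
      ∃ (W : FreeMonoid (α ⊕ Fin n)) (s' : Finset (FreeMonoid (α ⊕ Fin n)) × ℕ),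
        ↑s.1 ⊆ Dstar →
          W ∈ SV 𝒜 n ∧ s.2 < s'.2 ∧ s.1 ⊆ s'.1 ∧ ↑s'.1 ⊆ Dstar ∧
          (∀ av ∈ tuples 𝒜 r n, subst W av ∈ s'.1 ∧ ∀ u ∈ s.1, u * subst W av ∈ s'.1) ∧
          (∀ i : Fin k, ∃ K : Finset ℕ, K.Nonempty ∧
            (∀ e ∈ K, Nf s.2 < e ∧ e ≤ Nf s'.2) ∧
            (∑ j, M i j • τ j W) = ∑ n' ∈ K, x i n') := by
    intro r s
    by_cases hU : ↑s.1 ⊆ Dstar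
    · obtain ⟨W, U', q', h1, h2, h3, h4, h5, h6⟩ := hstep r s.2 s.1 hU
      exact ⟨W, (U', q'), fun _ => ⟨h1, h2, h3, h4, h5, h6⟩⟩
    · exact ⟨1, s, fun h => absurd h hU⟩
  choose Wf Sf hWf using hstep'
  set St : ℕ → Finset (FreeMonoid (α ⊕ Fin n)) × ℕ :=
    fun r => Nat.rec (∅, 0) (fun r' prev => Sf r' prev) r with hSt_def
  have hSts : ∀ r, St (r + 1) = Sf r (St r) := fun _ => rfl
  set w : ℕ → FreeMonoid (α ⊕ Fin n) := fun r => Wf r (St r) with hw_def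
  have hinv : ∀ r, ↑(St r).1 ⊆ Dstar := by
    intro r
    induction r with
    | zero =>
      intro v hv
      have h0 : (St 0).1 = ∅ := rfl
      rw [h0] at hv
      simp at hv
    | succ r ih =>
      rw [hSts]
      exact ((hWf r (St r)) ih).2.2.2.1
  have hP := fun r => hWf r (St r) (hinv r)
  have hwSV : ∀ r, w r ∈ SV 𝒜 n := fun r => (hP r).1
  have hqlt : ∀ r, (St r).2 < (St (r + 1)).2 := by
    intro r; rw [hSts]; exact (hP r).2.1
  have hsubmem : ∀ r, ∀ av ∈ tuples 𝒜 r n,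
      subst (w r) av ∈ (St (r + 1)).1 ∧
        ∀ u ∈ (St r).1, u * subst (w r) av ∈ (St (r + 1)).1 := by
    intro r; rw [hSts]; exact (hP r).2.2.2.2.1
  have hψ : ∀ r (i : Fin k), ∃ K : Finset ℕ, K.Nonempty ∧
      (∀ e ∈ K, Nf (St r).2 < e ∧ e ≤ Nf (St (r + 1)).2) ∧
      (∑ j, M i j • τ j (w r)) = ∑ n' ∈ K, x i n' := by
    intro r i
    obtain ⟨K, h1, h2, h3⟩ := (hP r).2.2.2.2.2 i
    refine ⟨K, h1, ?_, h3⟩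
    rw [hSts]
    exact h2
  choose K hKne hKbd hKsum using hψ
  have hqmono : ∀ r r', r ≤ r' → (St r).2 ≤ (St r').2 := by
    intro r r' h
    induction r', h using Nat.le_induction with
    | base => exact le_rfl
    | succ r' _ ih => exact le_trans ih (le_of_lt (hqlt r'))
  have hUmono : ∀ r r', r ≤ r' → (St r).1 ⊆ (St r').1 := by
    intro r r' h
    induction r', h using Nat.le_induction with
    | base => exact fun _ hv => hv
    | succ r' _ ih =>
      refine fun v hv => ?_
      have := ih hv
      rw [hSts]
      exact (hP r').2.2.1 this
  -- the main claim for membership in D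
  have hclaim : ∀ l' : ℕ, ∀ ms : Fin (l' + 1) → ℕ, StrictMono ms →
      ∀ a : Fin (l' + 1) → Fin n → α, (∀ i, a i ∈ tuples 𝒜 (ms i) n) →
      (List.ofFn fun i => subst (w (ms i)) (a i)).prod ∈ (St (ms (Fin.last l') + 1)).1 := by
    intro l'
    induction l' with
    | zero =>
      intro ms _ a ha
      have h0 := (hsubmem (ms 0) (a 0) (ha 0)).1
      simpa using h0
    | succ l' ih =>
      intro ms hms a ha
      rw [List.ofFn_succ', List.prod_concat]
      have hpref := ih (fun i => ms i.castSucc) (hms.comp Fin.strictMono_castSucc)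
        (fun i => a i.castSucc) (fun i => ha i.castSucc)
      have hstepl : ms (Fin.castSucc (Fin.last l')) + 1 ≤ ms (Fin.last (l' + 1)) := by
        have := hms (Fin.castSucc_lt_last (Fin.last l'))
        omega
      have hpref' := hUmono _ _ hstepl hpref
      exact (hsubmem (ms (Fin.last (l' + 1))) (a _) (ha _)).2 _ hpref'
  refine ⟨w, hwSV, ?_⟩
  intro l hl ms hms
  obtain ⟨l', rfl⟩ : ∃ l', l = l' + 1 := ⟨l - 1, by omega⟩
  constructor
  · intro a ha
    exact hDstarD (hinv (ms (Fin.last l') + 1) (Finset.mem_coe.2 (hclaim l' ms hms a ha)))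
  · intro i
    have hne' : (List.ofFn fun i' : Fin (l' + 1) => w (ms i')) ≠ [] := by
      intro h
      have := congrArg List.length h
      simp at this
    have hτprod : ∀ j, τ j (List.ofFn fun i' : Fin (l' + 1) => w (ms i')).prod
        = ∑ i', τ j (w (ms i')) := by
      intro j
      rw [tau_prod_SV (τ j) (hτhom j) hne' (by
        intro u hu
        rw [List.mem_ofFn] at hu
        obtain ⟨i', rfl⟩ := hu
        exact hwSV _), List.map_ofFn]
      exact List.sum_ofFn
    have hdisj : (↑(Finset.univ : Finset (Fin (l' + 1))) :
        Set (Fin (l' + 1))).PairwiseDisjoint fun i' => K (ms i') i := by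
      intro i1 _ i2 _ hne12
      have hord : ∀ j1 j2 : Fin (l' + 1), j1 < j2 →
          Disjoint (K (ms j1) i) (K (ms j2) i) := by
        intro j1 j2 hlt
        refine Finset.disjoint_left.2 fun e he1 he2 => ?_
        have h1 := (hKbd (ms j1) i e he1).2
        have h2 := (hKbd (ms j2) i e he2).1
        have hle : ms j1 + 1 ≤ ms j2 := hms hlt
        have h3 : Nf (St (ms j1 + 1)).2 ≤ Nf (St (ms j2)).2 :=
          hNmono.monotone (hqmono _ _ hle)
        omega
      rcases lt_or_gt_of_ne hne12 with hlt | hlt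
      · exact hord i1 i2 hlt
      · exact (hord i2 i1 hlt).symm
    refine ⟨Finset.univ.biUnion (fun i' : Fin (l' + 1) => K (ms i') i), ?_, ?_⟩
    · obtain ⟨e, he⟩ := hKne (ms 0) i
      exact ⟨e, Finset.mem_biUnion.2 ⟨0, Finset.mem_univ _, he⟩⟩
    · calc (∑ j, M i j • τ j (List.ofFn fun i' : Fin (l' + 1) => w (ms i')).prod)
          = ∑ j, M i j • ∑ i', τ j (w (ms i')) := by simp_rw [hτprod]
        _ = ∑ j, ∑ i', M i j • τ j (w (ms i')) := by simp_rw [Finset.smul_sum]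
        _ = ∑ i', ∑ j, M i j • τ j (w (ms i')) := Finset.sum_comm
        _ = ∑ i', ∑ n' ∈ K (ms i') i, x i n' :=
            Finset.sum_congr rfl fun i' _ => hKsum (ms i') i
        _ = ∑ n' ∈ Finset.univ.biUnion (fun i' : Fin (l' + 1) => K (ms i') i), x i n' :=
            (Finset.sum_biUnion hdisj).symm




end InfHJ
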